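/- arXiv:1206.5673 — 9 statements merged into one kernel-verified Lean document; each statement's English description precedes it below -/
import Mathlib

section
/- If λ₁, λ₂, μ, μ₁, μ₂ are positive reals with λ = λ₁ + λ₂ and α = λ + μ₁ + μ₂, and if (λ/μ)(1 + λ₁/μ₁) < 1 and (λ/μ)(1 + λ₂/μ₂) < 1, then αλ₁ < μμ₁ or αλ₂ < μμ₂. -/
theorem stmt_0 (l1 l2 mu mu1 mu2 : ℝ)
    (hl1 : 0 < l1) (hl2 : 0 < l2) (hmu : 0 < mu) (hmu1 : 0 < mu1) (hmu2 : 0 < mu2)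
    (l a : ℝ) (hl : l = l1 + l2) (ha : a = l + mu1 + mu2)
    (h1 : (l / mu) * (1 + l1 / mu1) < 1)
    (h2 : (l / mu) * (1 + l2 / mu2) < 1) :
    a * l1 < mu * mu1 ∨ a * l2 < mu * mu2 := by
  have h1' : l * (mu1 + l1) < mu * mu1 := by
    have := mul_lt_mul_of_pos_left h1 (mul_pos hmu hmu1)
    field_simp at this
    nlinarith
  have h2' : l * (mu2 + l2) < mu * mu2 := by
    have := mul_lt_mul_of_pos_left h2 (mul_pos hmu hmu2)
    field_simp at this
    nlinarith
  by_contra h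
  push_neg at h
  obtain ⟨ha1, ha2⟩ := h
  subst ha hl
  nlinarith
end

section
/- For positive reals λ₁, λ₂, μ, μ₁, μ₂ with λ = λ₁ + λ₂ and α = λ + μ₁ + μ₂: the inequality (λ/μ)(1 + λ₁/μ₁) < 1 together with αλ₁ ≥ μμ₁ implies λ₂μ₁ < λ₁μ₂. -/
theorem stmt_1 (l1 l2 mu mu1 mu2 : ℝ)
    (hl1 : 0 < l1) (hl2 : 0 < l2) (hmu : 0 < mu) (hmu1 : 0 < mu1) (hmu2 : 0 < mu2)
    (l a : ℝ) (hl : l = l1 + l2) (ha : a = l + mu1 + mu2)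
    (h1 : (l / mu) * (1 + l1 / mu1) < 1)
    (h2 : a * l1 ≥ mu * mu1) :
    l2 * mu1 < l1 * mu2 := by
  rw [div_mul_eq_mul_div, div_lt_one hmu] at h1
  have h1' : l * (mu1 + l1) < mu * mu1 := by
    have := mul_lt_mul_of_pos_right h1 hmu1
    field_simp at this ⊢
    nlinarith
  subst hl ha
  nlinarith
end

section
/- Let λ₁, λ₂, μ, μ₁, μ₂ > 0 with λ = λ₁+λ₂ and suppose (λ/μ)(1 + λ₂/μ₂) < 1. Then the polynomial Q₁(y) = λλ₂(λ+μ₂)y² + (λ+μ₂−μ)λμ₂ y − μμ₂² satisfies Q₁(y) < 0 for all y in the interval [0,1]. -/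
theorem stmt_2 (l1 l2 mu mu1 mu2 : ℝ)
    (hl1 : 0 < l1) (hl2 : 0 < l2) (hmu : 0 < mu) (hmu1 : 0 < mu1) (hmu2 : 0 < mu2)
    (l : ℝ) (hl : l = l1 + l2)
    (hstab : (l / mu) * (1 + l2 / mu2) < 1) :
    ∀ y ∈ Set.Icc (0 : ℝ) 1,
      l * l2 * (l + mu2) * y ^ 2 + (l + mu2 - mu) * l * mu2 * y - mu * mu2 ^ 2 < 0 := by
  intro y hy
  obtain ⟨h0, h1⟩ := hy
  have hl0 : 0 < l := by rw [hl]; linarith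
  have hkey : l * (mu2 + l2) < mu * mu2 := by
    have h : (l / mu) * (1 + l2 / mu2) = l * (mu2 + l2) / (mu * mu2) := by
      field_simp
    rw [h] at hstab
    exact (div_lt_one (by positivity)).1 hstab
  -- value at 1 is negative
  have hQ1 : (l + mu2) * (l * (l2 + mu2) - mu * mu2) < 0 := by
    apply mul_neg_of_pos_of_neg (by positivity)
    nlinarith
  have hA : 0 ≤ l * l2 * (l + mu2) * (y - y ^ 2) := by
    have : 0 ≤ y - y ^ 2 := by nlinarith
    positivity
  have hc : 0 < mu * mu2 ^ 2 := by positivity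
  nlinarith [mul_nonneg (sub_nonneg.2 h1) hc.le,
    mul_nonneg h0 (neg_nonneg.2 hQ1.le),
    mul_pos hc (neg_pos.2 hQ1), hA]
end

section
/- Let λ₁, λ₂, μ, μ₁, μ₂ > 0 with λ = λ₁+λ₂. The quadratic Q₂(x) = λλ₁(λ+μ₁)x² + (λ+μ₁−μ)λμ₁ x − μμ₁² has exactly one positive real root x₀, and if additionally λ/μ + λλ₁/(μμ₁) < 1, then x₀ > 1. -/
set_option maxHeartbeats 1000000 in
theorem stmt_3 (l1 l2 mu mu1 mu2 : ℝ)
    (hl1 : 0 < l1) (hl2 : 0 < l2) (hmu : 0 < mu) (hmu1 : 0 < mu1) (hmu2 : 0 < mu2)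
    (l : ℝ) (hl : l = l1 + l2)
    (Q2 : ℝ → ℝ)
    (hQ2 : ∀ x, Q2 x = l * l1 * (l + mu1) * x ^ 2 + (l + mu1 - mu) * l * mu1 * x - mu * mu1 ^ 2)
    (x0 : ℝ)
    (hx0 : x0 = (-((l + mu1 - mu) * l * mu1) +
      Real.sqrt (((l + mu1 - mu) * l * mu1) ^ 2 + 4 * l * l1 * (l + mu1) * mu * mu1 ^ 2)) /
      (2 * l * l1 * (l + mu1))) :
    (0 < x0 ∧ Q2 x0 = 0 ∧ ∀ x : ℝ, 0 < x → Q2 x = 0 → x = x0) ∧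
    (l / mu + l * l1 / (mu * mu1) < 1 → 1 < x0) := by
  have hlpos : 0 < l := by rw [hl]; linarith
  set a := l * l1 * (l + mu1) with ha_def
  set b := (l + mu1 - mu) * l * mu1 with hb_def
  have ha : 0 < a := by positivity
  have hc : 0 < 4 * l * l1 * (l + mu1) * mu * mu1 ^ 2 := by positivity
  set s := Real.sqrt (b ^ 2 + 4 * l * l1 * (l + mu1) * mu * mu1 ^ 2) with hs_def
  have hs0 : 0 ≤ s := Real.sqrt_nonneg _
  have hs2 : s ^ 2 = b ^ 2 + 4 * l * l1 * (l + mu1) * mu * mu1 ^ 2 := by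
    rw [hs_def, Real.sq_sqrt]; positivity
  have hsb : b < s := by nlinarith [sq_nonneg (s - b), sq_nonneg (s + b)]
  have hsnb : -b < s := by nlinarith [sq_nonneg (s - b), sq_nonneg (s + b)]
  have hx0' : x0 = (-b + s) / (2 * a) := by rw [hx0, ha_def]; ring_nf
  have h2a : (2 * a) ≠ 0 := by positivity
  have hax0 : 2 * a * x0 = -b + s := by
    rw [hx0']; field_simp
  have hx0pos : 0 < x0 := by
    rw [hx0']; apply div_pos (by linarith) (by linarith)
  have hQx0 : a * x0 ^ 2 + b * x0 - mu * mu1 ^ 2 = 0 := by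
    have h4 : 4 * a * (a * x0 ^ 2 + b * x0 - mu * mu1 ^ 2)
        = (2 * a * x0) ^ 2 + 2 * b * (2 * a * x0) - 4 * a * (mu * mu1 ^ 2) := by ring
    have h5 : (2 * a * x0) ^ 2 + 2 * b * (2 * a * x0) - 4 * a * (mu * mu1 ^ 2) = 0 := by
      rw [hax0]
      have : (-b + s) ^ 2 + 2 * b * (-b + s) = s ^ 2 - b ^ 2 := by ring
      rw [this, hs2, ha_def]; ring
    have := h4.trans h5
    have h4a : (4 * a) ≠ 0 := by positivity
    exact (mul_eq_zero.1 this).resolve_left h4a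
  have hroot : Q2 x0 = 0 := by rw [hQ2]; linarith
  refine ⟨⟨hx0pos, hroot, ?_⟩, ?_⟩
  · intro x hx hQx
    rw [hQ2] at hQx
    have hfac : (x - x0) * (a * (x + x0) + b) = 0 := by
      linear_combination hQx - hQx0
    rcases mul_eq_zero.1 hfac with h | h
    · linarith
    · exfalso
      nlinarith [mul_pos ha hx]
  · intro h
    have heq : l / mu + l * l1 / (mu * mu1) = (l * mu1 + l * l1) / (mu * mu1) := by
      field_simp
    rw [heq, div_lt_one (by positivity)] at h
    have hQ1 : a + b < mu * mu1 ^ 2 := by nlinarith [mul_pos hlpos hmu1]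
    rw [hx0', lt_div_iff₀ (by linarith : (0:ℝ) < 2 * a)]
    nlinarith [hs2, hs0, ha, hQ1, sq_nonneg (s - 2 * a - b), mul_pos ha ha]
end

section
/- Let λ̂₁, λ̂₂, μ̂₁, μ̂₂ > 0 with λ̂₁ < μ̂₁, and set λ̂ = λ̂₁+λ̂₂, ξ₂ = μ̂₁+μ̂₂+λ̂ − 2√(λ̂₁μ̂₁). Then ξ₂² − 4λ̂₂μ̂₂ ≥ 0, and the roots y₂ = (ξ₂ − √(ξ₂²−4λ̂₂μ̂₂))/(2λ̂₂) and y₃ = (ξ₂ + √(ξ₂²−4λ̂₂μ̂₂))/(2λ̂₂) of b₊(y) := λ̂₂y² − ξ₂y + μ̂₂ satisfy y₂ < 1 < y₃. -/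
theorem stmt_5 (l1 l2 m1 m2 : ℝ)
    (hl1 : 0 < l1) (hl2 : 0 < l2) (hm1 : 0 < m1) (hm2 : 0 < m2)
    (hlt : l1 < m1)
    (lam xi2 : ℝ) (hlam : lam = l1 + l2)
    (hxi2 : xi2 = m1 + m2 + lam - 2 * Real.sqrt (l1 * m1))
    (y2 y3 : ℝ)
    (hy2 : y2 = (xi2 - Real.sqrt (xi2 ^ 2 - 4 * l2 * m2)) / (2 * l2))
    (hy3 : y3 = (xi2 + Real.sqrt (xi2 ^ 2 - 4 * l2 * m2)) / (2 * l2)) :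
    0 ≤ xi2 ^ 2 - 4 * l2 * m2 ∧
    (l2 * y2 ^ 2 - xi2 * y2 + m2 = 0 ∧ l2 * y3 ^ 2 - xi2 * y3 + m2 = 0) ∧
    y2 < 1 ∧ 1 < y3 := by
  set s := Real.sqrt (l1 * m1) with hs
  have hs0 : 0 ≤ s := Real.sqrt_nonneg _
  have hs2 : s ^ 2 = l1 * m1 := Real.sq_sqrt (by positivity)
  -- s < (l1+m1)/2 strictly since l1 < m1
  have hkey : l2 + m2 < xi2 := by
    have h1 : s < (l1 + m1) / 2 := by nlinarith [sq_nonneg (l1 - m1)]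
    rw [hxi2, hlam]; linarith
  have hxipos : 0 < xi2 := by linarith
  have hdiscpos : 0 < xi2 ^ 2 - 4 * l2 * m2 := by
    nlinarith [sq_nonneg (l2 - m2), sq_nonneg (l2 + m2)]
  set d := Real.sqrt (xi2 ^ 2 - 4 * l2 * m2) with hd
  have hd0 : 0 ≤ d := Real.sqrt_nonneg _
  have hd2 : d ^ 2 = xi2 ^ 2 - 4 * l2 * m2 := Real.sq_sqrt hdiscpos.le
  have hl2ne : (2 * l2) ≠ 0 := by positivity
  refine ⟨hdiscpos.le, ⟨?_, ?_⟩, ?_, ?_⟩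
  · rw [hy2]; field_simp; nlinarith
  · rw [hy3]; field_simp; nlinarith
  · rw [hy2]
    rw [div_lt_one (by positivity)]
    -- xi2 - d < 2*l2 ⇔ xi2 - 2*l2 < d
    nlinarith [sq_nonneg (xi2 - 2 * l2 - d)]
  · rw [hy3]
    rw [lt_div_iff₀ (by positivity)]
    nlinarith [sq_nonneg (2 * l2 - xi2 - d)]
end

section
/- Let λ̂₁, λ̂₂, μ̂₁, μ̂₂ > 0 with λ̂ = λ̂₁+λ̂₂, and set ξ₁ = μ̂₁+μ̂₂+λ̂+2√(λ̂₁μ̂₁), ξ₂ = μ̂₁+μ̂₂+λ̂−2√(λ̂₁μ̂₁). Assume λ̂₁ < μ̂₁ and ξ₂² ≥ 4λ̂₂μ̂₂. Then the four roots y₁ = (ξ₁−√(ξ₁²−4λ̂₂μ̂₂))/(2λ̂₂), y₂ = (ξ₂−√(ξ₂²−4λ̂₂μ̂₂))/(2λ̂₂), y₃ = (ξ₂+√(ξ₂²−4λ̂₂μ̂₂))/(2λ̂₂), y₄ = (ξ₁+√(ξ₁²−4λ̂₂μ̂₂))/(2λ̂₂) satisfy 0 < y₁ < y₂ < 1 <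 y₃ < y₄. -/
/-!
For fixed `ξ`, the numbers `(ξ ∓ √(ξ² - 4 λ̂₂ μ̂₂)) / (2 λ̂₂)` are the two roots of
`λ̂₂ y² - ξ y + μ̂₂`. The larger one increases with `ξ`, and since the product of the roots is
the constant `μ̂₂ / λ̂₂ > 0`, the smaller one is positive and decreases; so `ξ₂ < ξ₁` nests the
root pair of `ξ₂` inside that of `ξ₁`.
Finally `ξ₂ - (λ̂₂ + μ̂₂) = (√μ̂₁ - √λ̂₁)² > 0`, i.e. the quadratic for `ξ₂` is negative at `y = 1`,
so `1` separates its two roots.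
-/

open Real

lemma two_sqrt_mul_lt_add {a b : ℝ} (ha : 0 ≤ a) (hab : a < b) : 2 * √(a * b) < a + b := by
  have hsqrt : √a < √b := sqrt_lt_sqrt ha hab
  rw [sqrt_mul ha]
  nlinarith [sq_sqrt ha, sq_sqrt (ha.trans hab.le)]

section Discriminant

variable {k ξ η : ℝ}

lemma sub_sqrt_sq_sub_pos (hk : 0 < k) (hξ : 0 < ξ) : 0 < ξ - √(ξ ^ 2 - k) :=
  sub_pos.2 ((sqrt_lt' hξ).2 (by linarith))

lemma sub_sqrt_sq_sub_eq_div (hkξ : k ≤ ξ ^ 2) (hξ : 0 < ξ) :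
    ξ - √(ξ ^ 2 - k) = k / (ξ + √(ξ ^ 2 - k)) := by
  have hpos : 0 < ξ + √(ξ ^ 2 - k) := by positivity
  rw [eq_div_iff hpos.ne']
  linear_combination -sq_sqrt (sub_nonneg.2 hkξ)

lemma add_sqrt_sq_sub_lt (hξ : 0 ≤ ξ) (hξη : ξ < η) :
    ξ + √(ξ ^ 2 - k) < η + √(η ^ 2 - k) :=
  add_lt_add_of_lt_of_le hξη (sqrt_le_sqrt (by nlinarith))

lemma sub_sqrt_sq_sub_lt (hk : 0 < k) (hkξ : k ≤ ξ ^ 2) (hξ : 0 < ξ) (hξη : ξ < η) :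
    η - √(η ^ 2 - k) < ξ - √(ξ ^ 2 - k) := by
  have hkη : k ≤ η ^ 2 := by nlinarith
  rw [sub_sqrt_sq_sub_eq_div hkξ hξ, sub_sqrt_sq_sub_eq_div hkη (hξ.trans hξη)]
  exact div_lt_div_of_pos_left hk (by positivity) (add_sqrt_sq_sub_lt hξ.le hξη)

end Discriminant

lemma abs_sub_lt_sqrt_sq_sub {a c ξ : ℝ} (ha : 0 < a) (hξ : a + c < ξ) :
    |ξ - 2 * a| < √(ξ ^ 2 - 4 * a * c) := by
  rw [lt_sqrt (abs_nonneg _), sq_abs]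
  nlinarith

lemma quadratic_roots_lt_one_lt {a c ξ : ℝ} (ha : 0 < a) (hξ : a + c < ξ) :
    (ξ - √(ξ ^ 2 - 4 * a * c)) / (2 * a) < 1 ∧ 1 < (ξ + √(ξ ^ 2 - 4 * a * c)) / (2 * a) := by
  obtain ⟨hlow, hhigh⟩ := abs_lt.1 (abs_sub_lt_sqrt_sq_sub ha hξ)
  exact ⟨(div_lt_one (by positivity)).2 (by linarith), (one_lt_div (by positivity)).2 (by linarith)⟩

theorem stmt_6_general (l1 l2 m1 m2 : ℝ)
    (hl1 : 0 < l1) (hl2 : 0 < l2) (hm2 : 0 < m2)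
    (hlt : l1 < m1)
    (lam xi1 xi2 : ℝ) (hlam : lam = l1 + l2)
    (hxi1 : xi1 = m1 + m2 + lam + 2 * Real.sqrt (l1 * m1))
    (hxi2 : xi2 = m1 + m2 + lam - 2 * Real.sqrt (l1 * m1))
    (y1 y2 y3 y4 : ℝ)
    (hy1 : y1 = (xi1 - Real.sqrt (xi1 ^ 2 - 4 * l2 * m2)) / (2 * l2))
    (hy2 : y2 = (xi2 - Real.sqrt (xi2 ^ 2 - 4 * l2 * m2)) / (2 * l2))
    (hy3 : y3 = (xi2 + Real.sqrt (xi2 ^ 2 - 4 * l2 * m2)) / (2 * l2))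
    (hy4 : y4 = (xi1 + Real.sqrt (xi1 ^ 2 - 4 * l2 * m2)) / (2 * l2)) :
    0 < y1 ∧ y1 < y2 ∧ y2 < 1 ∧ 1 < y3 ∧ y3 < y4 := by
  have hxi2_gt : l2 + m2 < xi2 := by
    have := two_sqrt_mul_lt_add hl1.le hlt
    rw [hxi2, hlam]
    linarith
  have hxi_lt : xi2 < xi1 := by
    have : 0 < √(l1 * m1) := sqrt_pos.2 (mul_pos hl1 (hl1.trans hlt))
    rw [hxi1, hxi2]
    linarith
  have hk : 0 < 4 * l2 * m2 := by positivity
  have hk_le : 4 * l2 * m2 ≤ xi2 ^ 2 := by nlinarith [sq_nonneg (l2 - m2)]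
  have hxi2_pos : 0 < xi2 := by linarith
  obtain ⟨hy2_lt, hy3_gt⟩ := quadratic_roots_lt_one_lt hl2 hxi2_gt
  subst hy1 hy2 hy3 hy4
  refine ⟨div_pos (sub_sqrt_sq_sub_pos hk (hxi2_pos.trans hxi_lt)) (by positivity),
    div_lt_div_of_pos_right (sub_sqrt_sq_sub_lt hk hk_le hxi2_pos hxi_lt) (by positivity),
    hy2_lt, hy3_gt,
    div_lt_div_of_pos_right (add_sqrt_sq_sub_lt hxi2_pos.le hxi_lt) (by positivity)⟩

theorem stmt_6 (l1 l2 m1 m2 : ℝ)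
    (hl1 : 0 < l1) (hl2 : 0 < l2) (hm1 : 0 < m1) (hm2 : 0 < m2)
    (hlt : l1 < m1)
    (lam xi1 xi2 : ℝ) (hlam : lam = l1 + l2)
    (hxi1 : xi1 = m1 + m2 + lam + 2 * Real.sqrt (l1 * m1))
    (hxi2 : xi2 = m1 + m2 + lam - 2 * Real.sqrt (l1 * m1))
    (hdisc : xi2 ^ 2 ≥ 4 * l2 * m2)
    (y1 y2 y3 y4 : ℝ)
    (hy1 : y1 = (xi1 - Real.sqrt (xi1 ^ 2 - 4 * l2 * m2)) / (2 * l2))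
    (hy2 : y2 = (xi2 - Real.sqrt (xi2 ^ 2 - 4 * l2 * m2)) / (2 * l2))
    (hy3 : y3 = (xi2 + Real.sqrt (xi2 ^ 2 - 4 * l2 * m2)) / (2 * l2))
    (hy4 : y4 = (xi1 + Real.sqrt (xi1 ^ 2 - 4 * l2 * m2)) / (2 * l2)) :
    0 < y1 ∧ y1 < y2 ∧ y2 < 1 ∧ 1 < y3 ∧ y3 < y4 :=
  stmt_6_general l1 l2 m1 m2 hl1 hl2 hm2 hlt lam xi1 xi2 hlam hxi1 hxi2 y1 y2 y3 y4 hy1 hy2 hy3 hy4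
end

section
/- Let λ₁, λ₂, μ, μ₂ > 0, λ = λ₁+λ₂, and suppose (λ/μ)(1 + λ₂/μ₂) < 1. If real numbers x, y satisfy λ(1−x)y + μ₂(y−x) = 0 and (1−x)(λ₁x−μ) + λ₂(1−y)x = 0 and 0 ≤ y < 1, then a contradiction follows; i.e., the system λ(1−x)y + μ₂(y−x) = 0, (1−x)(λ₁x−μ) + λ₂(1−y)x = 0 has no solution with y ∈ [0,1). -/
theorem stmt_9 (l1 l2 mu mu2 : ℝ)
    (hl1 : 0 < l1) (hl2 : 0 < l2) (hmu : 0 < mu) (hmu2 : 0 < mu2)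
    (l : ℝ) (hl : l = l1 + l2)
    (hstab : (l / mu) * (1 + l2 / mu2) < 1) :
    ¬ ∃ x y : ℝ, l * (1 - x) * y + mu2 * (y - x) = 0 ∧
      (1 - x) * (l1 * x - mu) + l2 * (1 - y) * x = 0 ∧
      0 ≤ y ∧ y < 1 := by
  rintro ⟨x, y, h1, h2, hy0, hy1⟩
  subst hl
  set l : ℝ := l1 + l2 with hl
  have hlpos : 0 < l := by positivity
  -- stability in polynomial form
  have hs : l * (l2 + mu2) < mu * mu2 := by
    have h := mul_lt_mul_of_pos_right hstab (mul_pos hmu hmu2)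
    have e : l / mu * (1 + l2 / mu2) * (mu * mu2) = l * (l2 + mu2) := by
      field_simp
      ring_nf
    rw [e, one_mul] at h
    exact h
  have hDpos : 0 < l * y + mu2 := by positivity
  have hx : x * (l * y + mu2) = (l + mu2) * y := by linear_combination -h1
  have e1 : (l * y + mu2) * (1 - x) = mu2 * (1 - y) := by linear_combination h1
  have key : (l * y + mu2) ^ 2 * ((1 - x) * (l1 * x - mu) + l2 * (1 - y) * x)
      = (1 - y) * (l * l2 * (l + mu2) * y ^ 2
          + mu2 * l * (l + mu2 - mu) * y - mu * mu2 ^ 2) := by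
    linear_combination ((l * y + mu2) * (l1 * x - mu)) * e1
      + (l2 * (1 - y) * (l * y + mu2) + mu2 * (1 - y) * l1) * hx
  rw [h2, mul_zero] at key
  have hP : l * l2 * (l + mu2) * y ^ 2
      + mu2 * l * (l + mu2 - mu) * y - mu * mu2 ^ 2 = 0 := by
    rcases mul_eq_zero.mp key.symm with h | h
    · linarith
    · exact h
  -- but the quadratic is negative on [0,1)
  nlinarith [mul_nonneg (mul_nonneg (mul_pos (mul_pos hlpos hl2) (by linarith : (0:ℝ) < l + mu2)).le hy0) (by linarith : (0:ℝ) ≤ 1 - y),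
    mul_nonneg hy0 (by nlinarith : (0:ℝ) ≤ (l + mu2) * (mu * mu2 - l * (l2 + mu2))),
    mul_pos hmu (mul_pos hmu2 hmu2), sq_nonneg y]
end

section
/- Under the stationary distribution of the two-orbit retrial queue Markov chain (assuming it exists), the cut balance identity λ₁ P(Q₁=m, L=1) = μ₁ P(Q₁=m+1, L=0) holds for every m ≥ 0, and consequently P(Q₁=0, L=0) = 1 − (λ/μ)(1+λ₁/μ₁), where λ = λ₁+λ₂. -/
private lemma tsum_shift {f : ℕ → ℝ} (hf : Summable f) :
    ∑' n, f (n + 1) = (∑' n, f n) - f 0 := by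
  have h := Summable.tsum_eq_zero_add hf
  linarith

private lemma summable_shift {f : ℕ → ℝ} (hf : Summable f) (k : ℕ) :
    Summable fun n => f (n + k) := (summable_nat_add_iff k).2 hf

private lemma aux_cut (l1 l2 mu mu1 mu2 l : ℝ) (hl : l = l1 + l2)
    (P : ℕ → ℕ → Fin 2 → ℝ)
    (hs0 : ∀ m, Summable fun n => P m n 0)
    (hs1 : ∀ m, Summable fun n => P m n 1)
    (b1 : l * P 0 0 0 = mu * P 0 0 1)
    (b2 : ∀ m, (l + mu1) * P (m + 1) 0 0 = mu * P (m + 1) 0 1)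
    (b3 : ∀ n, (l + mu2) * P 0 (n + 1) 0 = mu * P 0 (n + 1) 1)
    (b4 : ∀ m n, (l + mu1 + mu2) * P (m + 1) (n + 1) 0 = mu * P (m + 1) (n + 1) 1)
    (b5 : (l + mu) * P 0 0 1 = l * P 0 0 0 + mu1 * P 1 0 0 + mu2 * P 0 1 0)
    (b6 : ∀ m, (l + mu) * P (m + 1) 0 1 =
      l * P (m + 1) 0 0 + mu1 * P (m + 2) 0 0 + mu2 * P (m + 1) 1 0 + l1 * P m 0 1)
    (b7 : ∀ n, (l + mu) * P 0 (n + 1) 1 =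
      l * P 0 (n + 1) 0 + mu1 * P 1 (n + 1) 0 + mu2 * P 0 (n + 2) 0 + l2 * P 0 n 1)
    (b8 : ∀ m n, (l + mu) * P (m + 1) (n + 1) 1 =
      l * P (m + 1) (n + 1) 0 + mu1 * P (m + 2) (n + 1) 0 + mu2 * P (m + 1) (n + 2) 0
        + l1 * P m (n + 1) 1 + l2 * P (m + 1) n 1) :
    (∀ m, l1 * (∑' n, P m n 1) = mu1 * (∑' n, P (m + 1) n 0)) ∧
    (mu * (∑' n, P 0 n 1) = l * (∑' n, P 0 n 0) + mu2 * ((∑' n, P 0 n 0) - P 0 0 0)) ∧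
    (∀ m, mu * (∑' n, P (m + 1) n 1) =
      (l + mu1) * (∑' n, P (m + 1) n 0) + mu2 * ((∑' n, P (m + 1) n 0) - P (m + 1) 0 0)) := by
  have s0 : ∀ m k, Summable fun n => P m (n + k) 0 := fun m k => summable_shift (hs0 m) k
  have s1 : ∀ m k, Summable fun n => P m (n + k) 1 := fun m k => summable_shift (hs1 m) k
  -- shifted-sum identities
  have w0 : ∀ m, (∑' n, P m (n + 1) 0) = (∑' n, P m n 0) - P m 0 0 := fun m => tsum_shift (hs0 m)
  have w1 : ∀ m, (∑' n, P m (n + 1) 1) = (∑' n, P m n 1) - P m 0 1 := fun m => tsum_shift (hs1 m)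
  have w2 : ∀ m, (∑' n, P m (n + 2) 0) = (∑' n, P m n 0) - P m 0 0 - P m 1 0 := by
    intro m
    have a1 : (∑' n, P m (n + 2) 0) = (∑' n, P m (n + 1) 0) - P m 1 0 := tsum_shift (s0 m 1)
    rw [a1, w0 m]
  -- summed idle equation at level 0
  have hI0 : mu * (∑' n, P 0 n 1) = l * (∑' n, P 0 n 0) + mu2 * ((∑' n, P 0 n 0) - P 0 0 0) := by
    have h : ∑' n, mu * P 0 (n + 1) 1 = ∑' n, (l + mu2) * P 0 (n + 1) 0 :=
      tsum_congr fun n => (b3 n).symm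
    have m0 : (∑' n, mu * P 0 (n + 1) 1) = mu * ∑' n, P 0 (n + 1) 1 := tsum_mul_left
    have m1 : (∑' n, (l + mu2) * P 0 (n + 1) 0) = (l + mu2) * ∑' n, P 0 (n + 1) 0 := tsum_mul_left
    rw [w1 0] at m0; rw [w0 0] at m1
    linear_combination h + m1 - m0 - b1
  -- summed idle equation at level m+1
  have hIs : ∀ m, mu * (∑' n, P (m + 1) n 1) =
      (l + mu1) * (∑' n, P (m + 1) n 0) + mu2 * ((∑' n, P (m + 1) n 0) - P (m + 1) 0 0) := by
    intro m
    have h : ∑' n, mu * P (m + 1) (n + 1) 1 = ∑' n, (l + mu1 + mu2) * P (m + 1) (n + 1) 0 :=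
      tsum_congr fun n => (b4 m n).symm
    have m0 : (∑' n, mu * P (m + 1) (n + 1) 1) = mu * ∑' n, P (m + 1) (n + 1) 1 := tsum_mul_left
    have m1 : (∑' n, (l + mu1 + mu2) * P (m + 1) (n + 1) 0)
        = (l + mu1 + mu2) * ∑' n, P (m + 1) (n + 1) 0 := tsum_mul_left
    rw [w1 (m + 1)] at m0; rw [w0 (m + 1)] at m1
    linear_combination h + m1 - m0 - b2 m
  -- summed busy equation at level 0
  have hBusy0 : (l + mu) * (∑' n, P 0 n 1)
      = l * (∑' n, P 0 n 0) + mu1 * (∑' n, P 1 n 0)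
        + mu2 * ((∑' n, P 0 n 0) - P 0 0 0) + l2 * (∑' n, P 0 n 1) := by
    have h : ∑' n, (l + mu) * P 0 (n + 1) 1
        = ∑' n, (l * P 0 (n + 1) 0 + (mu1 * P 1 (n + 1) 0 + (mu2 * P 0 (n + 2) 0 + l2 * P 0 n 1))) :=
      tsum_congr fun n => by rw [b7 n]; ring
    have e1 : (∑' n, (l * P 0 (n + 1) 0 + (mu1 * P 1 (n + 1) 0 + (mu2 * P 0 (n + 2) 0 + l2 * P 0 n 1))))
        = (∑' n, l * P 0 (n + 1) 0) + ((∑' n, mu1 * P 1 (n + 1) 0)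
            + ((∑' n, mu2 * P 0 (n + 2) 0) + (∑' n, l2 * P 0 n 1))) := by
      have t1 := Summable.tsum_add ((s0 0 1).mul_left l)
        (((s0 1 1).mul_left mu1).add (((s0 0 2).mul_left mu2).add ((hs1 0).mul_left l2)))
      have t2 := Summable.tsum_add ((s0 1 1).mul_left mu1)
        (((s0 0 2).mul_left mu2).add ((hs1 0).mul_left l2))
      have t3 := Summable.tsum_add ((s0 0 2).mul_left mu2) ((hs1 0).mul_left l2)
      rw [t2, t3] at t1; exact t1
    have m0 : (∑' n, (l + mu) * P 0 (n + 1) 1) = (l + mu) * ∑' n, P 0 (n + 1) 1 := tsum_mul_left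
    have m1 : (∑' n, l * P 0 (n + 1) 0) = l * ∑' n, P 0 (n + 1) 0 := tsum_mul_left
    have m2 : (∑' n, mu1 * P 1 (n + 1) 0) = mu1 * ∑' n, P 1 (n + 1) 0 := tsum_mul_left
    have m3 : (∑' n, mu2 * P 0 (n + 2) 0) = mu2 * ∑' n, P 0 (n + 2) 0 := tsum_mul_left
    have m4 : (∑' n, l2 * P 0 n 1) = l2 * ∑' n, P 0 n 1 := tsum_mul_left
    rw [w1 0] at m0; rw [w0 0] at m1; rw [w0 1] at m2; rw [w2 0] at m3
    linear_combination h + e1 + m1 + m2 + m3 + m4 + b5 - m0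
  -- summed busy equation at level m+1
  have hBusyS : ∀ m, (l + mu) * (∑' n, P (m + 1) n 1)
      = l * (∑' n, P (m + 1) n 0) + mu1 * (∑' n, P (m + 2) n 0)
        + mu2 * ((∑' n, P (m + 1) n 0) - P (m + 1) 0 0)
        + l1 * (∑' n, P m n 1) + l2 * (∑' n, P (m + 1) n 1) := by
    intro m
    have h : ∑' n, (l + mu) * P (m + 1) (n + 1) 1
        = ∑' n, (l * P (m + 1) (n + 1) 0 + (mu1 * P (m + 2) (n + 1) 0
            + (mu2 * P (m + 1) (n + 2) 0 + (l1 * P m (n + 1) 1 + l2 * P (m + 1) n 1)))) :=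
      tsum_congr fun n => by rw [b8 m n]; ring
    have e1 : (∑' n, (l * P (m + 1) (n + 1) 0 + (mu1 * P (m + 2) (n + 1) 0
            + (mu2 * P (m + 1) (n + 2) 0 + (l1 * P m (n + 1) 1 + l2 * P (m + 1) n 1)))))
        = (∑' n, l * P (m + 1) (n + 1) 0) + ((∑' n, mu1 * P (m + 2) (n + 1) 0)
            + ((∑' n, mu2 * P (m + 1) (n + 2) 0)
              + ((∑' n, l1 * P m (n + 1) 1) + (∑' n, l2 * P (m + 1) n 1)))) := by
      have t1 := Summable.tsum_add ((s0 (m + 1) 1).mul_left l)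
        (((s0 (m + 2) 1).mul_left mu1).add (((s0 (m + 1) 2).mul_left mu2).add
          (((s1 m 1).mul_left l1).add ((hs1 (m + 1)).mul_left l2))))
      have t2 := Summable.tsum_add ((s0 (m + 2) 1).mul_left mu1)
        (((s0 (m + 1) 2).mul_left mu2).add (((s1 m 1).mul_left l1).add ((hs1 (m + 1)).mul_left l2)))
      have t3 := Summable.tsum_add ((s0 (m + 1) 2).mul_left mu2)
        (((s1 m 1).mul_left l1).add ((hs1 (m + 1)).mul_left l2))
      have t4 := Summable.tsum_add ((s1 m 1).mul_left l1) ((hs1 (m + 1)).mul_left l2)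
      rw [t2, t3, t4] at t1; exact t1
    have m0 : (∑' n, (l + mu) * P (m + 1) (n + 1) 1) = (l + mu) * ∑' n, P (m + 1) (n + 1) 1 :=
      tsum_mul_left
    have m1 : (∑' n, l * P (m + 1) (n + 1) 0) = l * ∑' n, P (m + 1) (n + 1) 0 := tsum_mul_left
    have m2 : (∑' n, mu1 * P (m + 2) (n + 1) 0) = mu1 * ∑' n, P (m + 2) (n + 1) 0 := tsum_mul_left
    have m3 : (∑' n, mu2 * P (m + 1) (n + 2) 0) = mu2 * ∑' n, P (m + 1) (n + 2) 0 := tsum_mul_left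
    have m4 : (∑' n, l1 * P m (n + 1) 1) = l1 * ∑' n, P m (n + 1) 1 := tsum_mul_left
    have m5 : (∑' n, l2 * P (m + 1) n 1) = l2 * ∑' n, P (m + 1) n 1 := tsum_mul_left
    rw [w1 (m + 1)] at m0; rw [w0 (m + 1)] at m1; rw [w0 (m + 2)] at m2
    rw [w2 (m + 1)] at m3; rw [w1 m] at m4
    linear_combination h + e1 + m1 + m2 + m3 + m4 + m5 + b6 m - m0
  refine ⟨?_, hI0, hIs⟩
  intro m
  induction m with
  | zero =>
    show l1 * (∑' n, P 0 n 1) = mu1 * (∑' n, P 1 n 0)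
    linear_combination hBusy0 - hI0 - (∑' n, P 0 n 1) * hl
  | succ m ih =>
    show l1 * (∑' n, P (m + 1) n 1) = mu1 * (∑' n, P (m + 2) n 0)
    linear_combination hBusyS m - hIs m + ih - (∑' n, P (m + 1) n 1) * hl

theorem stmt_16 (l1 l2 mu mu1 mu2 : ℝ)
    (hl1 : 0 < l1) (hl2 : 0 < l2) (hmu : 0 < mu) (hmu1 : 0 < mu1) (hmu2 : 0 < mu2)
    (l : ℝ) (hl : l = l1 + l2)
    (P : ℕ → ℕ → Fin 2 → ℝ)
    (hpos : ∀ m n k, 0 ≤ P m n k)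
    (hsum : Summable (fun p : ℕ × ℕ × Fin 2 => P p.1 p.2.1 p.2.2))
    (htot : ∑' (p : ℕ × ℕ × Fin 2), P p.1 p.2.1 p.2.2 = 1)
    -- balance equations of the two-orbit retrial queue
    (b1 : l * P 0 0 0 = mu * P 0 0 1)
    (b2 : ∀ m, (l + mu1) * P (m + 1) 0 0 = mu * P (m + 1) 0 1)
    (b3 : ∀ n, (l + mu2) * P 0 (n + 1) 0 = mu * P 0 (n + 1) 1)
    (b4 : ∀ m n, (l + mu1 + mu2) * P (m + 1) (n + 1) 0 = mu * P (m + 1) (n + 1) 1)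
    (b5 : (l + mu) * P 0 0 1 = l * P 0 0 0 + mu1 * P 1 0 0 + mu2 * P 0 1 0)
    (b6 : ∀ m, (l + mu) * P (m + 1) 0 1 =
      l * P (m + 1) 0 0 + mu1 * P (m + 2) 0 0 + mu2 * P (m + 1) 1 0 + l1 * P m 0 1)
    (b7 : ∀ n, (l + mu) * P 0 (n + 1) 1 =
      l * P 0 (n + 1) 0 + mu1 * P 1 (n + 1) 0 + mu2 * P 0 (n + 2) 0 + l2 * P 0 n 1)
    (b8 : ∀ m n, (l + mu) * P (m + 1) (n + 1) 1 =
      l * P (m + 1) (n + 1) 0 + mu1 * P (m + 2) (n + 1) 0 + mu2 * P (m + 1) (n + 2) 0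
        + l1 * P m (n + 1) 1 + l2 * P (m + 1) n 1) :
    (∀ m : ℕ, l1 * (∑' (n : ℕ), P m n 1) = mu1 * (∑' (n : ℕ), P (m + 1) n 0)) ∧
    (∑' (n : ℕ), P 0 n 0) = 1 - (l / mu) * (1 + l1 / mu1) := by
  -- summability infrastructure
  have hk : ∀ k : Fin 2, Summable fun q : ℕ × ℕ => P q.1 q.2 k := by
    intro k
    exact hsum.comp_injective (i := fun q : ℕ × ℕ => (q.1, q.2, k)) (by
      intro a b hab
      simp only [Prod.mk.injEq] at hab
      exact Prod.ext hab.1 hab.2.1)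
  have hrow : ∀ (k : Fin 2) m, Summable fun n => P m n k := fun k m =>
    (hk k).comp_injective (i := fun n => (m, n)) (by intro a b h; simpa using h)
  have hcol : ∀ (k : Fin 2) n, Summable fun m => P m n k := fun k n =>
    (hk k).comp_injective (i := fun m => (m, n)) (by intro a b h; simpa using h)
  have hswap : ∀ k : Fin 2, Summable fun q : ℕ × ℕ => P q.2 q.1 k := fun k => (hk k).prod_symm
  have hA : Summable fun m => ∑' n, P m n 1 :=
    ((summable_prod_of_nonneg (fun q => hpos q.1 q.2 1)).1 (hk 1)).2
  have hB : Summable fun m => ∑' n, P m n 0 :=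
    ((summable_prod_of_nonneg (fun q => hpos q.1 q.2 0)).1 (hk 0)).2
  have hA2 : Summable fun n => ∑' m, P m n 1 :=
    ((summable_prod_of_nonneg (fun q => hpos q.2 q.1 1)).1 (hswap 1)).2
  have hB2 : Summable fun n => ∑' m, P m n 0 :=
    ((summable_prod_of_nonneg (fun q => hpos q.2 q.1 0)).1 (hswap 0)).2
  -- the two orbit cuts
  obtain ⟨cut1, hI0, hIs⟩ :=
    aux_cut l1 l2 mu mu1 mu2 l hl P (hrow 0) (hrow 1) b1 b2 b3 b4 b5 b6 b7 b8
  obtain ⟨cut2, -, -⟩ :=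
    aux_cut l2 l1 mu mu2 mu1 l (by linarith) (fun m n k => P n m k)
      (hcol 0) (hcol 1) b1 b3 b2 (fun m n => by linear_combination b4 n m)
      (by linear_combination b5) (fun m => by linear_combination b7 m)
      (fun n => by linear_combination b6 n) (fun m n => by linear_combination b8 n m)
  refine ⟨cut1, ?_⟩
  -- summed cut identities
  have hBs : Summable fun m => ∑' n, P (m + 1) n 0 := summable_shift hB 1
  have hB2s : Summable fun n => ∑' m, P m (n + 1) 0 := summable_shift hB2 1
  have hc : Summable fun m => P (m + 1) 0 0 := summable_shift (hcol 0 0) 1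
  have S1 : l1 * (∑' m, ∑' n, P m n 1)
      = mu1 * ((∑' m, ∑' n, P m n 0) - (∑' n, P 0 n 0)) := by
    have h : ∑' m, (l1 * ∑' n, P m n 1) = ∑' m, (mu1 * ∑' n, P (m + 1) n 0) :=
      tsum_congr cut1
    have m0 : (∑' m, (l1 * ∑' n, P m n 1)) = l1 * ∑' m, ∑' n, P m n 1 := tsum_mul_left
    have m1 : (∑' m, (mu1 * ∑' n, P (m + 1) n 0)) = mu1 * ∑' m, ∑' n, P (m + 1) n 0 :=
      tsum_mul_left
    have w : (∑' m, ∑' n, P (m + 1) n 0) = (∑' m, ∑' n, P m n 0) - (∑' n, P 0 n 0) :=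
      tsum_shift hB
    rw [w] at m1
    linear_combination h + m1 - m0
  have S2 : l2 * (∑' n, ∑' m, P m n 1)
      = mu2 * ((∑' n, ∑' m, P m n 0) - (∑' m, P m 0 0)) := by
    have h : ∑' n, (l2 * ∑' m, P m n 1) = ∑' n, (mu2 * ∑' m, P m (n + 1) 0) :=
      tsum_congr cut2
    have m0 : (∑' n, (l2 * ∑' m, P m n 1)) = l2 * ∑' n, ∑' m, P m n 1 := tsum_mul_left
    have m1 : (∑' n, (mu2 * ∑' m, P m (n + 1) 0)) = mu2 * ∑' n, ∑' m, P m (n + 1) 0 :=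
      tsum_mul_left
    have w : (∑' n, ∑' m, P m (n + 1) 0) = (∑' n, ∑' m, P m n 0) - (∑' m, P m 0 0) :=
      tsum_shift hB2
    rw [w] at m1
    linear_combination h + m1 - m0
  have hcomm1 : (∑' m, ∑' n, P m n 1) = ∑' n, ∑' m, P m n 1 := Summable.tsum_comm (hswap 1)
  have hcomm0 : (∑' m, ∑' n, P m n 0) = ∑' n, ∑' m, P m n 0 := Summable.tsum_comm (hswap 0)
  have S2' : l2 * (∑' m, ∑' n, P m n 1)
      = mu2 * ((∑' m, ∑' n, P m n 0) - (∑' m, P m 0 0)) := by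
    rw [hcomm1, hcomm0]; exact S2
  -- total mass
  have hq : ∀ m, Summable fun q : ℕ × Fin 2 => P m q.1 q.2 := fun m =>
    hsum.comp_injective (i := fun q : ℕ × Fin 2 => (m, q)) (by intro a b h; simpa using h)
  have htot2 : (∑' m, ∑' n, P m n 0) + (∑' m, ∑' n, P m n 1) = 1 := by
    calc (∑' m, ∑' n, P m n 0) + (∑' m, ∑' n, P m n 1)
        = ∑' m, ((∑' n, P m n 0) + (∑' n, P m n 1)) := (Summable.tsum_add hB hA).symm
      _ = ∑' m, ∑' n, (P m n 0 + P m n 1) :=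
          tsum_congr fun m => (Summable.tsum_add (hrow 0 m) (hrow 1 m)).symm
      _ = ∑' m, ∑' n, ∑' k : Fin 2, P m n k := by
          refine tsum_congr fun m => tsum_congr fun n => ?_
          rw [tsum_fintype]
          exact (Fin.sum_univ_two _).symm
      _ = ∑' m, ∑' q : ℕ × Fin 2, P m q.1 q.2 :=
          tsum_congr fun m => (Summable.tsum_prod' (hq m) (fun n => Summable.of_finite)).symm
      _ = ∑' (p : ℕ × ℕ × Fin 2), P p.1 p.2.1 p.2.2 := (Summable.tsum_prod' hsum hq).symm
      _ = 1 := htot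
  -- global idle balance
  have hglob : mu * (∑' m, ∑' n, P m n 1)
      = l * (∑' m, ∑' n, P m n 0) + mu1 * ((∑' m, ∑' n, P m n 0) - (∑' n, P 0 n 0))
        + mu2 * ((∑' m, ∑' n, P m n 0) - (∑' m, P m 0 0)) := by
    have e : (∑' m, ∑' n, P m n 1) = (∑' n, P 0 n 1) + ∑' m, ∑' n, P (m + 1) n 1 :=
      Summable.tsum_eq_zero_add hA
    have h : ∑' m, (mu * ∑' n, P (m + 1) n 1)
        = ∑' m, ((l + mu1) * (∑' n, P (m + 1) n 0)
            + mu2 * ((∑' n, P (m + 1) n 0) - P (m + 1) 0 0)) := tsum_congr hIs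
    have m0 : (∑' m, (mu * ∑' n, P (m + 1) n 1)) = mu * ∑' m, ∑' n, P (m + 1) n 1 :=
      tsum_mul_left
    have e1 : (∑' m, ((l + mu1) * (∑' n, P (m + 1) n 0)
            + mu2 * ((∑' n, P (m + 1) n 0) - P (m + 1) 0 0)))
        = (∑' m, (l + mu1) * (∑' n, P (m + 1) n 0))
            + ∑' m, mu2 * ((∑' n, P (m + 1) n 0) - P (m + 1) 0 0) :=
      Summable.tsum_add (hBs.mul_left _) ((hBs.sub hc).mul_left mu2)
    have m1 : (∑' m, (l + mu1) * (∑' n, P (m + 1) n 0))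
        = (l + mu1) * ∑' m, ∑' n, P (m + 1) n 0 := tsum_mul_left
    have m2 : (∑' m, mu2 * ((∑' n, P (m + 1) n 0) - P (m + 1) 0 0))
        = mu2 * ∑' m, ((∑' n, P (m + 1) n 0) - P (m + 1) 0 0) := tsum_mul_left
    have e2 : (∑' m, ((∑' n, P (m + 1) n 0) - P (m + 1) 0 0))
        = (∑' m, ∑' n, P (m + 1) n 0) - ∑' m, P (m + 1) 0 0 := Summable.tsum_sub hBs hc
    have wA : (∑' m, ∑' n, P (m + 1) n 1) = (∑' m, ∑' n, P m n 1) - (∑' n, P 0 n 1) :=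
      tsum_shift hA
    have wB : (∑' m, ∑' n, P (m + 1) n 0) = (∑' m, ∑' n, P m n 0) - (∑' n, P 0 n 0) :=
      tsum_shift hB
    have wc : (∑' m, P (m + 1) 0 0) = (∑' m, P m 0 0) - P 0 0 0 := tsum_shift (hcol 0 0)
    rw [wA] at m0
    rw [wB] at m1
    rw [e2, wB, wc] at m2
    linear_combination h + e1 + m1 + m2 + hI0 - m0
  -- final arithmetic
  have hmuPA : mu * (∑' m, ∑' n, P m n 1) = l := by
    linear_combination hglob - S1 - S2' - (∑' m, ∑' n, P m n 1) * hl + l * htot2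
  have hmu' : (mu : ℝ) ≠ 0 := ne_of_gt hmu
  have hmu1' : (mu1 : ℝ) ≠ 0 := ne_of_gt hmu1
  field_simp

  linear_combination mu * S1 + mu * mu1 * htot2 - (mu1 + l1) * hmuPA
end

section
/- Let λ̂₁, λ̂₂, μ̂₁, μ̂₂ > 0 with λ̂₁ < μ̂₁, and let k(y) be a twice-differentiable solution of R(k(y),y)=0 near y=1 with k(1)=1, where R(x,y) = λ̂₁(1−x)xy + λ̂₂(1−y)xy − μ̂₁(1−x)y − μ̂₂(1−y)x. Then k''(1) = 2·((μ̂₁+μ̂₂−2(λ̂₁+λ̂₂))μ̂₁μ̂₂ + λ̂₁²μ̂₂ + λ̂₂²μ̂₁)/(μ̂₁−λ̂₁)³. -/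
/-!
Differentiating `R (k y) y = 0` once gives `R_x k' + R_y = 0` near `y = 1`, and differentiating
this identity once more at `y = 1` gives `R_xx k'² + 2 R_xy k' + R_yy + R_x k'' = 0`. At `(1, 1)`
one has `R_x = μ̂₁ - λ̂₁ ≠ 0`, so both equations can be solved, for `k'(1)` and then for `k''(1)`.
-/

open Filter Topology

theorem HasDerivAt.eq_zero_of_eventually_eq_zero {𝕜 F : Type*} [NontriviallyNormedField 𝕜]
    [NormedAddCommGroup F] [NormedSpace 𝕜 F] {f : 𝕜 → F} {f' : F} {a : 𝕜}
    (hf : HasDerivAt f f' a) (h0 : ∀ᶠ y in 𝓝 a, f y = 0) : f' = 0 :=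
  hf.unique ((hasDerivAt_const a 0).congr_of_eventuallyEq h0)

namespace KernelBranch

variable (l1 l2 m1 m2 : ℝ)

def R (x y : ℝ) : ℝ :=
  l1 * (1 - x) * x * y + l2 * (1 - y) * x * y - m1 * (1 - x) * y - m2 * (1 - y) * x

/-- `Rx`, `Ry` are the partial derivatives of `R` and `Rxy` its mixed second partial;
the pure second partials `-2 l1 y` and `-2 l2 x` appear inline below. -/
def Rx (x y : ℝ) : ℝ :=
  l1 * (1 - 2 * x) * y + l2 * (1 - y) * y + m1 * y - m2 * (1 - y)

def Ry (x y : ℝ) : ℝ :=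
  l1 * (1 - x) * x + l2 * (1 - 2 * y) * x - m1 * (1 - x) + m2 * x

def Rxy (x y : ℝ) : ℝ :=
  l1 + l2 + m1 + m2 - 2 * l1 * x - 2 * l2 * y

variable {l1 l2 m1 m2} {k : ℝ → ℝ} {k' y : ℝ}

theorem hasDerivAt_R_comp (hk : HasDerivAt k k' y) :
    HasDerivAt (fun z => R l1 l2 m1 m2 (k z) z)
      (Rx l1 l2 m1 m2 (k y) y * k' + Ry l1 l2 m1 m2 (k y) y) y := by
  have hid := hasDerivAt_id' (x := y)
  have h := (((((hk.const_sub 1).const_mul l1).mul hk).mul hid).add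
    ((((hid.const_sub 1).const_mul l2).mul hk).mul hid)).sub
    (((hk.const_sub 1).const_mul m1).mul hid) |>.sub (((hid.const_sub 1).const_mul m2).mul hk)
  refine h.congr_deriv ?_
  simp only [Rx, Ry, Pi.mul_apply]
  ring

theorem hasDerivAt_Rx_comp (hk : HasDerivAt k k' y) :
    HasDerivAt (fun z => Rx l1 l2 m1 m2 (k z) z)
      (-2 * l1 * y * k' + Rxy l1 l2 m1 m2 (k y) y) y := by
  have hid := hasDerivAt_id' (x := y)
  have h := (((((hk.const_mul 2).const_sub 1).const_mul l1).mul hid).add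
    (((hid.const_sub 1).const_mul l2).mul hid)).add (hid.const_mul m1) |>.sub
    ((hid.const_sub 1).const_mul m2)
  refine h.congr_deriv ?_
  simp only [Rxy]
  ring

theorem hasDerivAt_Ry_comp (hk : HasDerivAt k k' y) :
    HasDerivAt (fun z => Ry l1 l2 m1 m2 (k z) z)
      (Rxy l1 l2 m1 m2 (k y) y * k' - 2 * l2 * k y) y := by
  have hid := hasDerivAt_id' (x := y)
  have h := (((((hk.const_sub 1).const_mul l1).mul hk).add
    ((((hid.const_mul 2).const_sub 1).const_mul l2).mul hk)).sub
    ((hk.const_sub 1).const_mul m1)).add (hk.const_mul m2)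
  refine h.congr_deriv ?_
  simp only [Rxy]
  ring

end KernelBranch

open KernelBranch in
theorem stmt_19_general (l1 l2 m1 m2 : ℝ)
    (hlt : l1 < m1)
    (k k' : ℝ → ℝ) (hk1 : k 1 = 1)
    (hroot : ∀ᶠ y in nhds (1 : ℝ),
      l1 * (1 - k y) * k y * y + l2 * (1 - y) * k y * y
        - m1 * (1 - k y) * y - m2 * (1 - y) * k y = 0)
    (hderiv : ∀ᶠ y in nhds (1 : ℝ), HasDerivAt k (k' y) y)
    (d2 : ℝ) (hd2 : HasDerivAt k' d2 1) :
    d2 = 2 * ((m1 + m2 - 2 * (l1 + l2)) * m1 * m2 + l1 ^ 2 * m2 + l2 ^ 2 * m1) /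
      (m1 - l1) ^ 3 := by
  have hfirst : ∀ᶠ y in 𝓝 1,
      Rx l1 l2 m1 m2 (k y) y * k' y + Ry l1 l2 m1 m2 (k y) y = 0 := by
    filter_upwards [hderiv, hroot.eventually_nhds] with y hk hR
    exact (hasDerivAt_R_comp hk).eq_zero_of_eventually_eq_zero hR
  have hk := hderiv.self_of_nhds
  have hsecond := (((hasDerivAt_Rx_comp hk).mul hd2).add
    (hasDerivAt_Ry_comp hk)).eq_zero_of_eventually_eq_zero hfirst
  have h1 := hfirst.self_of_nhds
  simp only [Rx, Ry, Rxy, hk1] at h1 hsecond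
  have hne : (m1 - l1) ^ 3 ≠ 0 := pow_ne_zero _ (sub_ne_zero.mpr hlt.ne')
  rw [eq_div_iff hne]
  -- `h1` says `(m1 - l1) k'(1) = l2 - m2`; it eliminates `k'(1)` from `(m1 - l1)² · hsecond`.
  linear_combination (m1 - l1) ^ 2 * hsecond +
    (2 * l1 * ((m1 - l1) * k' 1 + (l2 - m2)) + 2 * (l1 + l2 - m1 - m2) * (m1 - l1)) * h1

theorem stmt_19 (l1 l2 m1 m2 : ℝ)
    (hl1 : 0 < l1) (hl2 : 0 < l2) (hm1 : 0 < m1) (hm2 : 0 < m2)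
    (hlt : l1 < m1)
    (k k' : ℝ → ℝ) (hk1 : k 1 = 1)
    (hroot : ∀ᶠ y in nhds (1 : ℝ),
      l1 * (1 - k y) * k y * y + l2 * (1 - y) * k y * y
        - m1 * (1 - k y) * y - m2 * (1 - y) * k y = 0)
    (hderiv : ∀ᶠ y in nhds (1 : ℝ), HasDerivAt k (k' y) y)
    (d2 : ℝ) (hd2 : HasDerivAt k' d2 1) :
    d2 = 2 * ((m1 + m2 - 2 * (l1 + l2)) * m1 * m2 + l1 ^ 2 * m2 + l2 ^ 2 * m1) /
      (m1 - l1) ^ 3 :=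
  stmt_19_general l1 l2 m1 m2 hlt k k' hk1 hroot hderiv d2 hd2
end
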